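/- Let R be a commutative ring and ν, h, φ, χ, c ∈ R. Substituting a₁ = 6ν, a₂ = 9ν² + 3h, a₃ = 9ν² + 3h + cφ, a₄ = 2ν(5ν² + 3h) + c(χ + νφ) into the polynomial x³ + y³ - a₁xy - a₂x - a₃y - a₄ ∈ R[x,y], and then setting c = 0, the resulting polynomial x³ + y³ - 6νxy - (9ν²+3h)(x+y) - 2ν(5ν²+3h) vanishes together with all its first partial derivatives in x and y at every point (x₀, y₀) satisfying x₀ + y₀ + 2ν = 0 and h = (y₀ + ν)². -/

import Mathlib

/-! In the coordinates `u = x + ν`, `v = y + ν` the central fiber is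
`u³ + v³ - 3ν(u + v)² - 3h(u + v) = (u + v)(u² - uv + v² - 3ν(u + v) - 3h)`,
a line times a conic. A product vanishes to second order where both factors vanish, and on the
line `u = -v` the conic reduces to `3(v² - h)`. -/

theorem deriv_mul_eq_zero_of_eq_zero {𝕜 𝔸 : Type*} [NontriviallyNormedField 𝕜]
    [NormedRing 𝔸] [NormedAlgebra 𝕜 𝔸] {c d : 𝕜 → 𝔸} {x : 𝕜}
    (hc : DifferentiableAt 𝕜 c x) (hd : DifferentiableAt 𝕜 d x)
    (hcx : c x = 0) (hdx : d x = 0) :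
    deriv (fun y => c y * d y) x = 0 := by
  rw [deriv_fun_mul hc hd, hcx, hdx, mul_zero, zero_mul, add_zero]

section

variable {R : Type*} [CommRing R]

def e6CentralLine (ν x y : R) : R := x + y + 2 * ν

def e6CentralConic (ν h x y : R) : R :=
  (x + ν) ^ 2 - (x + ν) * (y + ν) + (y + ν) ^ 2 - 3 * ν * (x + y + 2 * ν) - 3 * h

theorem e6CentralLine_mul_e6CentralConic (ν h x y : R) :
    e6CentralLine ν x y * e6CentralConic ν h x y =
      x ^ 3 + y ^ 3 - 6 * ν * x * y - (9 * ν ^ 2 + 3 * h) * (x + y)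
        - 2 * ν * (5 * ν ^ 2 + 3 * h) := by
  unfold e6CentralLine e6CentralConic
  ring

theorem e6CentralConic_eq_zero {ν h x y : R} (hline : e6CentralLine ν x y = 0)
    (hh : h = (y + ν) ^ 2) :
    e6CentralConic ν h x y = 0 := by
  unfold e6CentralLine at hline
  unfold e6CentralConic
  subst hh
  linear_combination (x + y + 2 * ν - 3 * (y + ν) - 3 * ν) * hline

end

/-- The `c = 0` member of the `E₆` weak coupling limit family,
`P(x,y) = x³ + y³ - 6νxy - (9ν²+3h)(x+y) - 2ν(5ν²+3h)`, vanishes together with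
its partial derivatives in `x` and `y` at every point `(x₀, y₀)` with
`x₀ + y₀ + 2ν = 0` and `h = (y₀ + ν)²`. -/
theorem E6_central_fiber_singular (ν h x₀ y₀ : ℂ)
    (h₁ : x₀ + y₀ + 2*ν = 0) (h₂ : h = (y₀ + ν)^2)
    (P : ℂ → ℂ → ℂ)
    (hP : ∀ x y : ℂ, P x y =
      x^3 + y^3 - 6*ν*x*y - (9*ν^2 + 3*h)*(x + y) - 2*ν*(5*ν^2 + 3*h)) :
    P x₀ y₀ = 0 ∧
    deriv (fun x : ℂ => P x y₀) x₀ = 0 ∧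
    deriv (fun y : ℂ => P x₀ y) y₀ = 0 := by
  have hfactor (x y : ℂ) : P x y = e6CentralLine ν x y * e6CentralConic ν h x y := by
    rw [hP, e6CentralLine_mul_e6CentralConic]
  have hline : e6CentralLine ν x₀ y₀ = 0 := h₁
  have hconic : e6CentralConic ν h x₀ y₀ = 0 := e6CentralConic_eq_zero hline h₂
  simp only [hfactor]
  refine ⟨by rw [hline, zero_mul], ?_, ?_⟩ <;>
    exact deriv_mul_eq_zero_of_eq_zero (by unfold e6CentralLine; fun_prop)
      (by unfold e6CentralConic; fun_prop) hline hconic
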